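/- Let λ > 0 and f : ℝⁿ → ℝ be given by f(x) = λ‖x‖₁ + ½‖x‖₂². Then f is strongly convex with constant 1, its Fenchel conjugate is f*(x*) = ½‖S_λ(x*)‖₂², and f* is differentiable with ∇f*(x*) = S_λ(x*), where S_λ(x) = max{|x| − λ, 0}·sign(x) is applied componentwise. -/

import Mathlib

open RealInnerProductSpace

noncomputable section

/-- The objective `f(x) = λ‖x‖₁ + ½‖x‖₂²` on Euclidean space. -/
def fE {n : ℕ} (lam : ℝ) (x : EuclideanSpace ℝ (Fin n)) : ℝ :=
  lam * (∑ j, |x j|) + ‖x‖ ^ 2 / 2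

/-- Componentwise soft shrinkage operator `S_λ(x) = max{|x| − λ, 0}·sign(x)`. -/
def softShrinkE {n : ℕ} (lam : ℝ) (x : EuclideanSpace ℝ (Fin n)) :
    EuclideanSpace ℝ (Fin n) :=
  WithLp.toLp 2 (fun j => Real.sign (x j) * max (|x j| - lam) 0)

/-- Fenchel conjugate `f*(x*) = sup_y ⟨x*, y⟩ − f(y)`. -/
def fEConj {n : ℕ} (lam : ℝ) (xs : EuclideanSpace ℝ (Fin n)) : ℝ :=
  sSup {t : ℝ | ∃ y : EuclideanSpace ℝ (Fin n), t = ⟪xs, y⟫ - fE lam y}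

/-! Subtracting `½‖x‖²` from `f` leaves the convex function `λ‖x‖₁`, so `f` is 1-strongly convex;
testing a subgradient inequality at `x` on the segment from `x` to `y` and letting the step tend
to zero upgrades it to the quadratic lower bound.

The supremum defining `f*` splits over the coordinates, where `a y − λ|y| − y²/2` is maximised at
`y = S_λ(a)` with value `S_λ(a)²/2`. Hence `S_λ(x)` is a subgradient of `f*` at every `x`, and
exchanging the roles of `x` and `z` bounds `f*(z) − f*(x) − ⟪S_λ x, z − x⟫` by
`⟪S_λ z − S_λ x, z − x⟫ = o(‖z − x‖)`, since `S_λ` is continuous. -/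

open RealInnerProductSpace Filter Topology Set

section InnerProductSpace

variable {E : Type*} [NormedAddCommGroup E] [InnerProductSpace ℝ E]

theorem StrongConvexOn.add_inner_add_sq_le_of_subgradient {f : E → ℝ} {m : ℝ}
    (hf : StrongConvexOn univ m f) {x g : E} (hg : ∀ z, f x + ⟪g, z - x⟫ ≤ f z) (y : E) :
    f x + ⟪g, y - x⟫ + m / 2 * ‖y - x‖ ^ 2 ≤ f y := by
  set φ : ℝ → ℝ := fun t => f x + ⟪g, y - x⟫ + (1 - t) * (m / 2 * ‖y - x‖ ^ 2)
  have hφ : Tendsto φ (𝓝[>] 0) (𝓝 (φ 0)) :=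
    ((by fun_prop : Continuous φ).tendsto 0).mono_left nhdsWithin_le_nhds
  have hφ_le : ∀ t ∈ Ioo (0 : ℝ) 1, φ t ≤ f y := by
    rintro t ⟨ht0, ht1⟩
    have hconv := hf.2 (mem_univ x) (mem_univ y) (sub_nonneg.2 ht1.le) ht0.le (sub_add_cancel 1 t)
    have hsub := hg ((1 - t) • x + t • y)
    have hdir : (1 - t) • x + t • y - x = t • (y - x) := by
      simp only [sub_smul, one_smul, smul_sub]; abel
    rw [hdir, real_inner_smul_right] at hsub
    simp only [smul_eq_mul, norm_sub_rev x y] at hconv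
    refine le_of_mul_le_mul_left ?_ ht0
    simp only [φ]
    linarith
  simpa [φ] using le_of_tendsto hφ (eventually_of_mem (Ioo_mem_nhdsGT one_pos) hφ_le)

theorem hasGradientAt_of_subgradient [CompleteSpace E] {F : E → ℝ} {S : E → E} {x : E}
    (hS : ∀ y z, F y + ⟪S y, z - y⟫ ≤ F z) (hSx : ContinuousAt S x) :
    HasGradientAt F (S x) x := by
  rw [hasGradientAt_iff_hasFDerivAt, hasFDerivAt_iff_isLittleO, Asymptotics.isLittleO_iff]
  intro ε hε
  filter_upwards [hSx.eventually (Metric.closedBall_mem_nhds (S x) hε)] with z hz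
  have hlower := hS x z
  have hupper : F z - F x ≤ ⟪S z, z - x⟫ := by
    have h := hS z x
    rw [← neg_sub z x, inner_neg_right] at h
    linarith
  have hcs : ⟪S z - S x, z - x⟫ ≤ ε * ‖z - x‖ :=
    (real_inner_le_norm _ _).trans
      (mul_le_mul_of_nonneg_right (mem_closedBall_iff_norm.1 hz) (norm_nonneg _))
  rw [inner_sub_left] at hcs
  rw [InnerProductSpace.toDual_apply_apply, Real.norm_eq_abs, abs_le]
  constructor <;> linarith

end InnerProductSpace

def softShrink (lam a : ℝ) : ℝ :=
  Real.sign a * max (|a| - lam) 0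

section SoftShrink

variable {lam : ℝ}

theorem softShrink_eq_max_sub_max (hlam : 0 ≤ lam) (a : ℝ) :
    softShrink lam a = max (a - lam) 0 - max (-a - lam) 0 := by
  rcases lt_trichotomy a 0 with ha | rfl | ha
  · rw [softShrink, Real.sign_of_neg ha, abs_of_neg ha, max_eq_right (by linarith : a - lam ≤ 0)]
    ring
  · simp [softShrink, hlam]
  · rw [softShrink, Real.sign_of_pos ha, abs_of_pos ha, max_eq_right (by linarith : -a - lam ≤ 0)]
    ring

theorem continuous_softShrink (hlam : 0 ≤ lam) : Continuous (softShrink lam) := by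
  simp only [funext (softShrink_eq_max_sub_max hlam)]
  fun_prop

theorem abs_softShrink (hlam : 0 ≤ lam) (a : ℝ) : |softShrink lam a| = max (|a| - lam) 0 := by
  rcases lt_trichotomy a 0 with ha | rfl | ha
  · simp [softShrink, Real.sign_of_neg ha]
  · simp [softShrink, hlam]
  · simp [softShrink, Real.sign_of_pos ha]

theorem mul_softShrink (a : ℝ) : a * softShrink lam a = |a| * max (|a| - lam) 0 := by
  rcases lt_trichotomy a 0 with ha | rfl | ha
  · rw [softShrink, Real.sign_of_neg ha, abs_of_neg ha]; ring
  · simp [softShrink]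
  · rw [softShrink, Real.sign_of_pos ha, abs_of_pos ha]; ring

theorem mul_sub_le_softShrink_sq (hlam : 0 ≤ lam) (a y : ℝ) :
    a * y - (lam * |y| + y ^ 2 / 2) ≤ softShrink lam a ^ 2 / 2 := by
  rw [← sq_abs (softShrink lam a), abs_softShrink hlam]
  have hay : a * y ≤ |a| * |y| := (le_abs_self _).trans (abs_mul a y).le
  have hmax : (|a| - lam) * |y| ≤ max (|a| - lam) 0 * |y| := by gcongr; exact le_max_left _ _
  nlinarith [sq_nonneg (|y| - max (|a| - lam) 0), sq_abs y]

theorem mul_softShrink_sub (hlam : 0 ≤ lam) (a : ℝ) :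
    a * softShrink lam a - (lam * |softShrink lam a| + softShrink lam a ^ 2 / 2) =
      softShrink lam a ^ 2 / 2 := by
  rw [← sq_abs (softShrink lam a), mul_softShrink, abs_softShrink hlam]
  rcases le_total (|a| - lam) 0 with h | h
  · simp [max_eq_right h]
  · rw [max_eq_left h]; ring

end SoftShrink

section Objective

variable {n : ℕ} {lam : ℝ}

theorem softShrinkE_apply (x : EuclideanSpace ℝ (Fin n)) (j : Fin n) :
    softShrinkE lam x j = softShrink lam (x j) :=
  rfl

theorem continuous_softShrinkE (hlam : 0 ≤ lam) :
    Continuous (softShrinkE (n := n) lam) :=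
  (PiLp.continuous_toLp 2 _).comp <| continuous_pi fun j =>
    (continuous_softShrink hlam).comp (PiLp.continuous_apply 2 _ j)

theorem strongConvexOn_fE (hlam : 0 ≤ lam) : StrongConvexOn univ 1 (fE (n := n) lam) := by
  rw [strongConvexOn_iff_convex]
  have hl1 : ConvexOn ℝ univ fun x : EuclideanSpace ℝ (Fin n) => ∑ j, |x j| := by
    refine ⟨convex_univ, fun x _ y _ a b ha hb _ => ?_⟩
    simp only [PiLp.add_apply, PiLp.smul_apply, smul_eq_mul, Finset.mul_sum,
      ← Finset.sum_add_distrib]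
    gcongr with j
    exact (abs_add_le _ _).trans_eq (by rw [abs_mul, abs_mul, abs_of_nonneg ha, abs_of_nonneg hb])
  exact (hl1.smul hlam).congr fun x _ => by simp only [fE, smul_eq_mul]; ring

theorem inner_sub_fE_eq_sum (xs y : EuclideanSpace ℝ (Fin n)) :
    ⟪xs, y⟫ - fE lam y = ∑ j, (xs j * y j - (lam * |y j| + y j ^ 2 / 2)) := by
  simp only [PiLp.inner_apply, RCLike.inner_apply, conj_trivial, fE,
    EuclideanSpace.real_norm_sq_eq, Finset.sum_sub_distrib, Finset.sum_add_distrib,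
    Finset.mul_sum, Finset.sum_div]
  simp only [mul_comm]

theorem inner_sub_fE_le (hlam : 0 ≤ lam) (xs y : EuclideanSpace ℝ (Fin n)) :
    ⟪xs, y⟫ - fE lam y ≤ 1 / 2 * ‖softShrinkE lam xs‖ ^ 2 := by
  rw [inner_sub_fE_eq_sum, EuclideanSpace.real_norm_sq_eq, Finset.mul_sum]
  gcongr with j
  simpa only [softShrinkE_apply, one_div_mul_eq_div] using mul_sub_le_softShrink_sq hlam (xs j) (y j)

theorem inner_sub_fE_softShrinkE (hlam : 0 ≤ lam) (xs : EuclideanSpace ℝ (Fin n)) :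
    ⟪xs, softShrinkE lam xs⟫ - fE lam (softShrinkE lam xs) = 1 / 2 * ‖softShrinkE lam xs‖ ^ 2 := by
  rw [inner_sub_fE_eq_sum, EuclideanSpace.real_norm_sq_eq, Finset.mul_sum]
  refine Finset.sum_congr rfl fun j _ => ?_
  simpa only [softShrinkE_apply, one_div_mul_eq_div] using mul_softShrink_sub hlam (xs j)

theorem fEConj_eq (hlam : 0 ≤ lam) (xs : EuclideanSpace ℝ (Fin n)) :
    fEConj lam xs = 1 / 2 * ‖softShrinkE lam xs‖ ^ 2 :=
  IsGreatest.csSup_eq ⟨⟨_, (inner_sub_fE_softShrinkE hlam xs).symm⟩,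
    by rintro _ ⟨y, rfl⟩; exact inner_sub_fE_le hlam xs y⟩

theorem fEConj_add_inner_le (hlam : 0 ≤ lam) (x z : EuclideanSpace ℝ (Fin n)) :
    fEConj lam x + ⟪softShrinkE lam x, z - x⟫ ≤ fEConj lam z := by
  rw [fEConj_eq hlam x, ← inner_sub_fE_softShrinkE hlam x, fEConj_eq hlam z, inner_sub_right]
  linarith [inner_sub_fE_le hlam z (softShrinkE lam x), real_inner_comm (softShrinkE lam x) z,
    real_inner_comm (softShrinkE lam x) x]

end Objective

/-- `f(x) = λ‖x‖₁ + ½‖x‖₂²` is strongly convex with constant `1` (in the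
subgradient sense), its Fenchel conjugate is `f*(x*) = ½‖S_λ(x*)‖₂²`, and `f*` is
differentiable with `∇f*(x*) = S_λ(x*)`. -/
theorem fObj_strongly_convex_conjugate_gradient {n : ℕ} (lam : ℝ) (hlam : 0 < lam) :
    (∀ x g y : EuclideanSpace ℝ (Fin n),
        (∀ z, fE lam x + ⟪g, z - x⟫ ≤ fE lam z) →
        fE lam x + ⟪g, y - x⟫ + 1 / 2 * ‖y - x‖ ^ 2 ≤ fE lam y) ∧
    (∀ xs : EuclideanSpace ℝ (Fin n),
        fEConj lam xs = 1 / 2 * ‖softShrinkE lam xs‖ ^ 2) ∧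
    (∀ xs : EuclideanSpace ℝ (Fin n),
        HasGradientAt (fEConj lam) (softShrinkE lam xs) xs) :=
  ⟨fun _ _ y hg => (strongConvexOn_fE hlam.le).add_inner_add_sq_le_of_subgradient hg y,
    fEConj_eq hlam.le,
    fun _ => hasGradientAt_of_subgradient (fEConj_add_inner_le hlam.le)
      (continuous_softShrinkE hlam.le).continuousAt⟩
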